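/- arXiv:2207.05453 — 5 statements merged into one kernel-verified Lean document; each statement's English description precedes it below -/
import Mathlib

section
/- Let (G, F) be an F-sup-semilattice and j a prenucleus on (G, F). Then the set G_j of fixed points of j is a closure system on G (closed under arbitrary meets), and the associated closure operator n(j), defined by n(j)(a) = ⋀{x ∈ G_j | a ≤ x}, is a nucleus on (G, F); in particular F(n(j)(a)) ≤ n(j)(F(a)) for all a ∈ G. -/
/-!
Fixed points of a monotone inflationary `j` are closed under meets, so they are the closed
elements of a closure operator `n`. Since `F` preserves joins it has
a right adjoint `u y = ⋁ {x | F x ≤ y}`, and `F ∘ j ≤ j ∘ F` makes `u` send `j`-fixed points to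
`j`-fixed points. Hence `u (n (F a))` is a fixed point above `a`, so `n a ≤ u (n (F a))`, which
is `F (n a) ≤ n (F a)`.
-/

open Function

theorem galoisConnection_of_map_sSup {α β : Type*} [CompleteLattice α] [CompleteLattice β]
    {F : α → β} (hF : ∀ s, F (sSup s) = sSup (F '' s)) :
    GaloisConnection F fun y ↦ sSup {x | F x ≤ y} := by
  have hmono : Monotone F := OrderHomClass.mono (⟨F, hF⟩ : sSupHom α β)
  refine fun a y ↦ ⟨fun h ↦ le_sSup h, fun h ↦ ?_⟩
  calc F a ≤ F (sSup {x | F x ≤ y}) := hmono h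
    _ = sSup (F '' {x | F x ≤ y}) := hF _
    _ ≤ y := sSup_le <| Set.forall_mem_image.2 fun _ hx ↦ hx

section FixedPoints

variable {α : Type*} {j : α → α}

theorem isFixedPt_sInf [CompleteLattice α] (hj : Monotone j) (hincr : ∀ a, a ≤ j a)
    {s : Set α} (hs : ∀ a ∈ s, IsFixedPt j a) : IsFixedPt j (sInf s) :=
  le_antisymm (le_sInf fun a ha ↦ (hj (sInf_le ha)).trans_eq (hs a ha)) (hincr _)

theorem GaloisConnection.isFixedPt_u [PartialOrder α] {l u : α → α} (gc : GaloisConnection l u)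
    (hj : Monotone j) (hincr : ∀ a, a ≤ j a) (hlax : ∀ a, l (j a) ≤ j (l a)) {y : α}
    (hy : IsFixedPt j y) : IsFixedPt j (u y) :=
  le_antisymm (gc.le_u <| (hlax _).trans <| (hj (gc.l_u_le y)).trans_eq hy) (hincr _)

variable [CompleteLattice α]

def fixedPointClosure (hj : Monotone j) (hincr : ∀ a, a ≤ j a) : ClosureOperator α :=
  .ofCompletePred (IsFixedPt j) fun _ ↦ isFixedPt_sInf hj hincr

theorem fixedPointClosure_apply (hj : Monotone j) (hincr : ∀ a, a ≤ j a) (a : α) :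
    fixedPointClosure hj hincr a = sInf {x | j x = x ∧ a ≤ x} := by
  have hset : {x | a ≤ x ∧ (fixedPointClosure hj hincr).IsClosed x} = {x | j x = x ∧ a ≤ x} :=
    Set.ext fun _ ↦ and_comm
  exact ((fixedPointClosure hj hincr).closure_isGLB a).unique (hset ▸ isGLB_sInf _)

theorem map_fixedPointClosure_le {l u : α → α} (gc : GaloisConnection l u)
    (hj : Monotone j) (hincr : ∀ a, a ≤ j a) (hlax : ∀ a, l (j a) ≤ j (l a)) (a : α) :
    l (fixedPointClosure hj hincr a) ≤ fixedPointClosure hj hincr (l a) := by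
  set c := fixedPointClosure hj hincr
  have hclosed : IsFixedPt j (u (c (l a))) := gc.isFixedPt_u hj hincr hlax (c.isClosed_closure _)
  exact gc.l_le <| c.closure_min (gc.le_u (c.le_closure _)) hclosed

end FixedPoints

theorem stmt_4 {G : Type*} [CompleteLattice G] (F j : G → G)
    (hF : ∀ X : Set G, F (sSup X) = sSup (F '' X))
    (hj : Monotone j) (hincr : ∀ a, a ≤ j a) (hlax : ∀ a, F (j a) ≤ j (F a)) :
    (∀ M : Set G, (∀ a ∈ M, j a = a) → j (sInf M) = sInf M) ∧
    ∀ n : G → G, (∀ a, n a = sInf {x | j x = x ∧ a ≤ x}) →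
      Monotone n ∧ (∀ a, a ≤ n a) ∧ (∀ a, n (n a) = n a) ∧ (∀ a, F (n a) ≤ n (F a)) := by
  refine ⟨fun M ↦ isFixedPt_sInf hj hincr, fun n hn ↦ ?_⟩
  obtain rfl : n = fixedPointClosure hj hincr :=
    funext fun a ↦ (hn a).trans (fixedPointClosure_apply hj hincr a).symm
  exact ⟨ClosureOperator.monotone _, ClosureOperator.le_closure _, ClosureOperator.idempotent _,
    map_fixedPointClosure_le (galoisConnection_of_map_sSup hF) hj hincr hlax⟩
end

section
/- Let (G, F) be an F-sup-semilattice and X ⊆ G × G a set of pairs such that (F(c), F(d)) ∈ X whenever (c, d) ∈ X. Define j[X](a) = a ∨ ⋁{c ∈ G | ∃d, d ≤ a and ((c,d) ∈ X or (d,c) ∈ X)}. Then j[X] is a prenucleus on (G, F): it is order-preserving, increasing, and satisfies F(j[X](a)) ≤ j[X](F(a)) for all a ∈ G. -/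
/-!
Every element of the join defining `j[X] a` is related by `X` to some `d ≤ a`; applying `F`
keeps it related by `X` to `F d ≤ F a`. Since `F` preserves joins, `F (j[X] a)` is therefore a
join of elements lying below `j[X] (F a)`.
-/

section

variable {α : Type*} [Preorder α]

def relatedBelow (X : Set (α × α)) (a : α) : Set α :=
  {c | ∃ d, d ≤ a ∧ ((c, d) ∈ X ∨ (d, c) ∈ X)}

theorem relatedBelow_mono (X : Set (α × α)) : Monotone (relatedBelow X) := by
  rintro a b hab c ⟨d, hda, hcd⟩
  exact ⟨d, hda.trans hab, hcd⟩

theorem image_relatedBelow_subset {F : α → α} (hF : Monotone F)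
    {X : Set (α × α)} (hX : ∀ c d, (c, d) ∈ X → (F c, F d) ∈ X) (a : α) :
    F '' relatedBelow X a ⊆ relatedBelow X (F a) := by
  rintro _ ⟨c, ⟨d, hda, hcd⟩, rfl⟩
  exact ⟨F d, hF hda, hcd.imp (hX c d) (hX d c)⟩

end

theorem stmt_5 {G : Type*} [CompleteLattice G] (F : G → G) (X : Set (G × G))
    (hF : ∀ Y : Set G, F (sSup Y) = sSup (F '' Y))
    (hX : ∀ c d, (c, d) ∈ X → (F c, F d) ∈ X) :
    ∀ jX : G → G,
      (∀ a, jX a = a ⊔ sSup {c | ∃ d, d ≤ a ∧ ((c, d) ∈ X ∨ (d, c) ∈ X)}) →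
      Monotone jX ∧ (∀ a, a ≤ jX a) ∧ (∀ a, F (jX a) ≤ jX (F a)) := by
  intro jX hj
  change ∀ a, jX a = a ⊔ sSup (relatedBelow X a) at hj
  let f : sSupHom G G := ⟨F, hF⟩
  have hF_mono : Monotone F := OrderHomClass.mono f
  refine ⟨fun a b hab => ?_, fun a => hj a ▸ le_sup_left, fun a => ?_⟩
  · rw [hj a, hj b]
    exact sup_le_sup hab (sSup_le_sSup (relatedBelow_mono X hab))
  · calc F (jX a) = F a ⊔ sSup (F '' relatedBelow X a) := by
          rw [hj a, ← hF]; exact map_sup f _ _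
      _ ≤ jX (F a) := by
        rw [hj (F a)]
        exact sup_le_sup_left (sSup_le_sSup (image_relatedBelow_subset hF_mono hX a)) _
end

section
/- Let (G, F) be an F-sup-semilattice, X ⊆ G × G with (F × F)(X) ⊆ X, j[X] the associated prenucleus and n(j[X]) the induced nucleus (closure to fixed points of j[X]). For every F-sup-semilattice (H, F_H) and every lax morphism g : G → H of F-sup-semilattices (g preserves all joins and F_H(g(a)) ≤ g(F(a))) such that g(c) = g(d) for all (c, d) ∈ X, there exists a unique lax morphism ḡ : G_{n(j[X])} → H of F-sup-semilattices with g = ḡ ∘ n(j[X]). -/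
/-!
A join-preserving `g` has a right adjoint, so `sSup {b | g b ≤ g a}` is the largest element that
`g` sends below `g a`. As `g` identifies the pairs of `X`, this element is a fixed point of `j[X]`
above `a`, hence it dominates `n a` and `g (n a) = g a`. The lift is `g` restricted to the fixed
points; it inherits join preservation and laxity from `g` through `g ∘ n = g`, and it is unique
because every fixed point is of the form `n a`.
-/

section
variable {G H : Type*} [CompleteLattice G] [CompleteLattice H]

def prenucleus (X : Set (G × G)) (a : G) : G :=
  a ⊔ sSup {c | ∃ d, d ≤ a ∧ ((c, d) ∈ X ∨ (d, c) ∈ X)}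

theorem map_sSup_setOf_map_le (g : sSupHom G H) (y : H) : g (sSup {b | g b ≤ y}) ≤ y := by
  rw [map_sSup]
  exact sSup_le (by rintro _ ⟨b, hb, rfl⟩; exact hb)

theorem prenucleus_sSup_setOf_map_le (g : sSupHom G H) {X : Set (G × G)}
    (hgX : ∀ c d, (c, d) ∈ X → g c = g d) (y : H) :
    prenucleus X (sSup {b | g b ≤ y}) = sSup {b | g b ≤ y} := by
  set m := sSup {b | g b ≤ y}
  have hm : g m ≤ y := map_sSup_setOf_map_le g y
  refine le_antisymm (le_sSup ?_) le_sup_left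
  rw [Set.mem_ofPred_eq, prenucleus, map_sup]
  refine sup_le hm ?_
  rw [map_sSup]
  refine sSup_le ?_
  rintro _ ⟨c, ⟨d, hdm, hcd⟩, rfl⟩
  have hgcd : g c = g d := hcd.elim (hgX c d) fun h => (hgX d c h).symm
  exact hgcd ▸ (OrderHomClass.mono g hdm).trans hm

theorem map_sInf_fixedPoints_prenucleus (g : sSupHom G H) {X : Set (G × G)}
    (hgX : ∀ c d, (c, d) ∈ X → g c = g d) (a : G) :
    g (sInf {x | prenucleus X x = x ∧ a ≤ x}) = g a := by
  refine le_antisymm ?_ (OrderHomClass.mono g (le_sInf fun x hx => hx.2))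
  calc g (sInf {x | prenucleus X x = x ∧ a ≤ x}) ≤ g (sSup {b | g b ≤ g a}) :=
        OrderHomClass.mono g (sInf_le ⟨prenucleus_sSup_setOf_map_le g hgX (g a), le_sSup le_rfl⟩)
    _ ≤ g a := map_sSup_setOf_map_le g (g a)

end

theorem stmt_6_general {G H : Type*} [CompleteLattice G] [CompleteLattice H]
    (F : G → G) (FH : H → H) (X : Set (G × G))
    (jX n : G → G)
    (hjX : ∀ a, jX a = a ⊔ sSup {c | ∃ d, d ≤ a ∧ ((c, d) ∈ X ∨ (d, c) ∈ X)})
    (hn : ∀ a, n a = sInf {x | jX x = x ∧ a ≤ x})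
    (hidem : ∀ a, n (n a) = n a)
    (g : G → H)
    (hg : ∀ Y : Set G, g (sSup Y) = sSup (g '' Y))
    (hglax : ∀ a, FH (g a) ≤ g (F a))
    (hgX : ∀ c d, (c, d) ∈ X → g c = g d) :
    ∃! gbar : {a : G // n a = a} → H,
      (∀ a : G, g a = gbar ⟨n a, hidem a⟩) ∧
      (∀ M : Set {a : G // n a = a},
        gbar ⟨n (sSup (Subtype.val '' M)), hidem _⟩ = sSup (gbar '' M)) ∧
      (∀ a : {a : G // n a = a}, FH (gbar a) ≤ gbar ⟨n (F a.val), hidem _⟩) := by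
  obtain rfl : jX = prenucleus X := funext hjX
  have hgn : ∀ a, g (n a) = g a := fun a =>
    hn a ▸ map_sInf_fixedPoints_prenucleus ⟨g, hg⟩ hgX a
  refine ⟨fun p => g p.val, ⟨fun a => (hgn a).symm, fun M => ?_, fun a => ?_⟩, ?_⟩
  · change g (n _) = _
    rw [hgn, hg, Set.image_image]
  · change FH (g a.val) ≤ g (n (F a.val))
    rw [hgn]
    exact hglax _
  · rintro gbar ⟨hgbar, -, -⟩
    funext ⟨a, ha⟩
    exact ((hgbar a).trans (congrArg gbar (Subtype.ext ha))).symm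

theorem stmt_6 {G H : Type*} [CompleteLattice G] [CompleteLattice H]
    (F : G → G) (FH : H → H) (X : Set (G × G))
    (hF : ∀ Y : Set G, F (sSup Y) = sSup (F '' Y))
    (hFH : ∀ Y : Set H, FH (sSup Y) = sSup (FH '' Y))
    (hX : ∀ c d, (c, d) ∈ X → (F c, F d) ∈ X)
    (jX n : G → G)
    (hjX : ∀ a, jX a = a ⊔ sSup {c | ∃ d, d ≤ a ∧ ((c, d) ∈ X ∨ (d, c) ∈ X)})
    (hn : ∀ a, n a = sInf {x | jX x = x ∧ a ≤ x})
    (hidem : ∀ a, n (n a) = n a)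
    (g : G → H)
    (hg : ∀ Y : Set G, g (sSup Y) = sSup (g '' Y))
    (hglax : ∀ a, FH (g a) ≤ g (F a))
    (hgX : ∀ c d, (c, d) ∈ X → g c = g d) :
    ∃! gbar : {a : G // n a = a} → H,
      (∀ a : G, g a = gbar ⟨n a, hidem a⟩) ∧
      (∀ M : Set {a : G // n a = a},
        gbar ⟨n (sSup (Subtype.val '' M)), hidem _⟩ = sSup (gbar '' M)) ∧
      (∀ a : {a : G // n a = a}, FH (gbar a) ≤ gbar ⟨n (F a.val), hidem _⟩) :=
  stmt_6_general F FH X jX n hjX hn hidem g hg hglax hgX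
end

section
/- Let H₁ = (G₁, F₁), H₂ = (G₂, F₂) be F-sup-semilattices, L a sup-semilattice, and f : G₁ → G₂ a lax morphism of F-sup-semilattices (f preserves all joins and F₂(f(x)) ≤ f(F₁(x)) for all x). Then precomposition with f, α ↦ α ∘ f, is a frame homomorphism J[H₂, L] → J[H₁, L]: if β(x) ≤ α(F₂(x)) for all x ∈ G₂, then (β ∘ f)(x) ≤ (α ∘ f)(F₁(x)) for all x ∈ G₁. -/
theorem monotone_of_map_sSup {A B : Type*} [CompleteLattice A] [CompleteLattice B] {g : A → B}
    (hg : ∀ X : Set A, g (sSup X) = sSup (g '' X)) : Monotone g :=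
  OrderHomClass.mono (⟨g, hg⟩ : sSupHom A B)

theorem map_sSup_comp {A B C : Type*} [CompleteLattice A] [CompleteLattice B] [CompleteLattice C]
    {g : B → C} {f : A → B} (hg : ∀ X : Set B, g (sSup X) = sSup (g '' X))
    (hf : ∀ X : Set A, f (sSup X) = sSup (f '' X)) (X : Set A) :
    (g ∘ f) (sSup X) = sSup ((g ∘ f) '' X) :=
  (sSupHom.comp ⟨g, hg⟩ ⟨f, hf⟩).map_sSup' X

theorem stmt_13_general {G₁ G₂ L : Type*} [CompleteLattice G₁] [CompleteLattice G₂] [CompleteLattice L]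
    (F₁ : G₁ → G₁) (F₂ : G₂ → G₂)
    (f : G₁ → G₂)
    (hf : ∀ X : Set G₁, f (sSup X) = sSup (f '' X))
    (hflax : ∀ x, F₂ (f x) ≤ f (F₁ x))
    (α β : G₂ → L)
    (hα : ∀ X : Set G₂, α (sSup X) = sSup (α '' X))
    (hS : ∀ x, β x ≤ α (F₂ x)) :
    (∀ X : Set G₁, (α ∘ f) (sSup X) = sSup ((α ∘ f) '' X)) ∧
    (∀ x : G₁, (β ∘ f) x ≤ (α ∘ f) (F₁ x)) :=
  ⟨map_sSup_comp hα hf, fun x => (hS (f x)).trans (monotone_of_map_sSup hα (hflax x))⟩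

theorem stmt_13 {G₁ G₂ L : Type*} [CompleteLattice G₁] [CompleteLattice G₂] [CompleteLattice L]
    (F₁ : G₁ → G₁) (F₂ : G₂ → G₂)
    (hF₁ : ∀ X : Set G₁, F₁ (sSup X) = sSup (F₁ '' X))
    (hF₂ : ∀ X : Set G₂, F₂ (sSup X) = sSup (F₂ '' X))
    (f : G₁ → G₂)
    (hf : ∀ X : Set G₁, f (sSup X) = sSup (f '' X))
    (hflax : ∀ x, F₂ (f x) ≤ f (F₁ x))
    (α β : G₂ → L)
    (hα : ∀ X : Set G₂, α (sSup X) = sSup (α '' X))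
    (hβ : ∀ X : Set G₂, β (sSup X) = sSup (β '' X))
    (hS : ∀ x, β x ≤ α (F₂ x)) :
    (∀ X : Set G₁, (α ∘ f) (sSup X) = sSup ((α ∘ f) '' X)) ∧
    (∀ x : G₁, (β ∘ f) x ≤ (α ∘ f) (F₁ x)) :=
  stmt_13_general F₁ F₂ f hf hflax α β hα hS
end

section
/- Let H = (G, F) be an F-sup-semilattice and L a complete lattice. Define μ_H : G → L^{T_{[H,L]}} by (μ_H(x))(α) = α(x), where T_{[H,L]} is the set of join-preserving maps G → L. Then μ_H preserves all joins and is a lax morphism of F-sup-semilattices: F^{J[H,L]}(μ_H(x)) ≤ μ_H(F(x)) for all x ∈ G, where (F^{J[H,L]}(y))(α) = ⋁{y(β) | α S_{[H,L]} β} and α S_{[H,L]} β iff β(z) ≤ α(F(z)) for all z ∈ G. -/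
/-- The set of join-preserving maps from `G` to `L`. -/
def JP (G L : Type*) [CompleteLattice G] [CompleteLattice L] :=
  {α : G → L // ∀ Y : Set G, α (sSup Y) = sSup (α '' Y)}

theorem JP.eval_sSup {G L : Type*} [CompleteLattice G] [CompleteLattice L] (X : Set G) :
    (fun α : JP G L => α.val (sSup X)) = sSup ((fun (x : G) (α : JP G L) => α.val x) '' X) := by
  funext α
  rw [α.prop X, sSup_image, sSup_image, iSup_apply]
  simp only [iSup_apply]

theorem stmt_15_general {G L : Type*} [CompleteLattice G] [CompleteLattice L]
    (F : G → G) :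
    (∀ X : Set G,
      (fun (α : JP G L) => α.val (sSup X)) =
        sSup ((fun (x : G) (α : JP G L) => α.val x) '' X)) ∧
    (∀ (x : G) (α : JP G L),
      sSup {y | ∃ β : JP G L, (∀ z, β.val z ≤ α.val (F z)) ∧ y = β.val x}
        ≤ α.val (F x)) :=
  ⟨JP.eval_sSup, fun x _ => sSup_le fun _ ⟨_, hβ, hy⟩ => hy ▸ hβ x⟩

theorem stmt_15 {G L : Type*} [CompleteLattice G] [CompleteLattice L]
    (F : G → G) (hF : ∀ X : Set G, F (sSup X) = sSup (F '' X)) :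
    (∀ X : Set G,
      (fun (α : JP G L) => α.val (sSup X)) =
        sSup ((fun (x : G) (α : JP G L) => α.val x) '' X)) ∧
    (∀ (x : G) (α : JP G L),
      sSup {y | ∃ β : JP G L, (∀ z, β.val z ≤ α.val (F z)) ∧ y = β.val x}
        ≤ α.val (F x)) :=
  stmt_15_general F
end
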